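/- arXiv:1104.3882 — 5 statements merged into one kernel-verified Lean document; each statement's English description precedes it below -/
import Mathlib

section
/- Suppose n ≡ 1 (mod 3). Then X̂(β) = Σ_{i=1}^{(n-1)/3} (β^{3^{3i-1}} − β^{3^{3i-2}}) satisfies X̂(β)^3 − X̂(β) + β = 0 for every β ∈ F_{3^n} with Tr(β) = 0. -/
/-- Suppose `n ≡ 1 (mod 3)`. Then
`X̂(β) = ∑_{i=1}^{(n-1)/3} (β^(3^(3i-1)) - β^(3^(3i-2)))` satisfies
`X̂(β)^3 - X̂(β) + β = 0` for every `β ∈ 𝔽_{3^n}` with `Tr(β) = 0`. -/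
theorem thirding_solution_n_one_mod_three (n : ℕ) (hn : n % 3 = 1) (β : GaloisField 3 n)
    (hβ : ∑ i ∈ Finset.range n, β ^ 3 ^ i = 0) :
    (∑ i ∈ Finset.Icc 1 ((n - 1) / 3), (β ^ 3 ^ (3 * i - 1) - β ^ 3 ^ (3 * i - 2))) ^ 3
      - (∑ i ∈ Finset.Icc 1 ((n - 1) / 3), (β ^ 3 ^ (3 * i - 1) - β ^ 3 ^ (3 * i - 2)))
      + β = 0 := by
  classical
  obtain ⟨m, rfl⟩ : ∃ m, n = 3 * m + 1 := ⟨n / 3, by omega⟩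
  have hm : (3 * m + 1 - 1) / 3 = m := by omega
  rw [hm]
  have key : ∀ x : GaloisField 3 (3 * m + 1), x + x + x = 0 := by
    intro x
    have h3 : (3 : GaloisField 3 (3 * m + 1)) = 0 := by
      simpa using CharP.cast_eq_zero (GaloisField 3 (3 * m + 1)) 3
    linear_combination x * h3
  -- Frobenius: cube of the sum
  have hpow : (∑ i ∈ Finset.Icc 1 m, (β ^ 3 ^ (3 * i - 1) - β ^ 3 ^ (3 * i - 2))) ^ 3
      = ∑ i ∈ Finset.Icc 1 m, (β ^ 3 ^ (3 * i) - β ^ 3 ^ (3 * i - 1)) := by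
    rw [sum_pow_char]
    refine Finset.sum_congr rfl ?_
    intro i hi
    have hi1 : 1 ≤ i := (Finset.mem_Icc.mp hi).1
    rw [sub_pow_char, ← pow_mul, ← pow_mul, ← pow_succ, ← pow_succ]
    have e1 : 3 * i - 1 + 1 = 3 * i := by omega
    have e2 : 3 * i - 2 + 1 = 3 * i - 1 := by omega
    rw [e1, e2]
  -- trace sum splits into groups of three
  have trace_split : ∀ M : ℕ, ∑ j ∈ Finset.range (3 * M + 1), β ^ 3 ^ j
      = β + ∑ i ∈ Finset.Icc 1 M,
          (β ^ 3 ^ (3 * i - 2) + β ^ 3 ^ (3 * i - 1) + β ^ 3 ^ (3 * i)) := by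
    intro M
    induction M with
    | zero => simp
    | succ k ih =>
      have hr : 3 * (k + 1) + 1 = (3 * k + 1) + 1 + 1 + 1 := by ring
      rw [hr, Finset.sum_range_succ, Finset.sum_range_succ, Finset.sum_range_succ, ih,
        Finset.sum_Icc_succ_top (by omega : 1 ≤ k + 1)]
      have e1 : 3 * (k + 1) - 2 = 3 * k + 1 := by omega
      have e2 : 3 * (k + 1) - 1 = 3 * k + 1 + 1 := by omega
      have e3 : 3 * (k + 1) = 3 * k + 1 + 1 + 1 := by omega
      rw [e1, e2, e3]
      ring
  rw [trace_split m] at hβ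
  rw [hpow, ← Finset.sum_sub_distrib]
  have hterm : ∀ i ∈ Finset.Icc 1 m,
      (β ^ 3 ^ (3 * i) - β ^ 3 ^ (3 * i - 1) - (β ^ 3 ^ (3 * i - 1) - β ^ 3 ^ (3 * i - 2)))
      = (β ^ 3 ^ (3 * i - 2) + β ^ 3 ^ (3 * i - 1) + β ^ 3 ^ (3 * i)) := by
    intro i _
    linear_combination - key (β ^ 3 ^ (3 * i - 1))
  rw [Finset.sum_congr rfl hterm]
  linear_combination hβ
end

section
/- Suppose n ≡ 2 (mod 3). Then X̂(β) = −β + Σ_{i=1}^{(n-2)/3} (β^{3^{3i-1}} − β^{3^{3i}}) satisfies X̂(β)^3 − X̂(β) + β = 0 for every β ∈ F_{3^n} with Tr(β) = 0. -/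
private lemma aux_sum3 {K : Type*} [AddCommMonoid K] (g : ℕ → K) (m : ℕ) :
    ∑ j ∈ Finset.range (3 * m), g (j + 2)
      = ∑ i ∈ Finset.range m, (g (3 * i + 2) + g (3 * i + 3) + g (3 * i + 4)) := by
  induction m with
  | zero => simp
  | succ m ih =>
    rw [show 3 * (m + 1) = 3 * m + 1 + 1 + 1 by ring, Finset.sum_range_succ,
      Finset.sum_range_succ, Finset.sum_range_succ, ih, Finset.sum_range_succ]
    simp only [show 3 * m + 1 + 2 = 3 * m + 3 from by ring,
      show 3 * m + 1 + 1 + 2 = 3 * m + 4 from by ring, add_assoc]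

/-- Suppose `n ≡ 2 (mod 3)`. Then
`X̂(β) = -β + ∑_{i=1}^{(n-2)/3} (β^(3^(3i-1)) - β^(3^(3i)))` satisfies
`X̂(β)^3 - X̂(β) + β = 0` for every `β ∈ 𝔽_{3^n}` with `Tr(β) = 0`. -/
theorem thirding_solution_n_two_mod_three (n : ℕ) (hn : n % 3 = 2) (β : GaloisField 3 n)
    (hβ : ∑ i ∈ Finset.range n, β ^ 3 ^ i = 0) :
    (-β + ∑ i ∈ Finset.Icc 1 ((n - 2) / 3), (β ^ 3 ^ (3 * i - 1) - β ^ 3 ^ (3 * i))) ^ 3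
      - (-β + ∑ i ∈ Finset.Icc 1 ((n - 2) / 3), (β ^ 3 ^ (3 * i - 1) - β ^ 3 ^ (3 * i)))
      + β = 0 := by
  set m := (n - 2) / 3 with hm
  have hnm : n = 3 * m + 2 := by omega
  set g : ℕ → GaloisField 3 n := fun j => β ^ 3 ^ j with hg
  have h3 : (3 : GaloisField 3 n) = 0 := by
    exact_mod_cast CharP.cast_eq_zero (GaloisField 3 n) 3
  have hfrobdef : ∀ x : GaloisField 3 n, x ^ 3 = frobenius (GaloisField 3 n) 3 x :=
    fun x => rfl
  have hfrob : ∀ j : ℕ, (g j) ^ 3 = g (j + 1) := by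
    intro j; simp only [hg]; rw [← pow_mul, ← pow_succ]
  have hS : ∑ i ∈ Finset.Icc 1 m, (β ^ 3 ^ (3 * i - 1) - β ^ 3 ^ (3 * i))
      = ∑ i ∈ Finset.range m, (g (3 * i + 2) - g (3 * i + 3)) := by
    rw [← Finset.Ico_add_one_right_eq_Icc, Finset.sum_Ico_eq_sum_range]
    apply Finset.sum_congr (by congr 1)
    intro i _
    have h1 : 3 * (1 + i) - 1 = 3 * i + 2 := by omega
    have h2 : 3 * (1 + i) = 3 * i + 3 := by omega
    rw [h1, h2]
  have hT : g 0 + g 1 + ∑ i ∈ Finset.range m,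
      (g (3 * i + 2) + g (3 * i + 3) + g (3 * i + 4)) = 0 := by
    rw [← aux_sum3 g m]
    rw [show Finset.range n = Finset.range (3 * m + 1 + 1) from by rw [hnm]] at hβ
    rw [Finset.sum_range_succ', Finset.sum_range_succ'] at hβ
    have hβ' : ∑ j ∈ Finset.range (3 * m), g (j + 2) + g 1 + g 0 = 0 := hβ
    linear_combination hβ'
  have hcube : (-β + ∑ i ∈ Finset.range m, (g (3 * i + 2) - g (3 * i + 3))) ^ 3
      = -g 1 + ∑ i ∈ Finset.range m, (g (3 * i + 3) - g (3 * i + 4)) := by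
    rw [hfrobdef, map_add, map_neg, map_sum]
    have hb : frobenius (GaloisField 3 n) 3 β = g 1 := by
      rw [← hfrobdef]; simp [hg]
    rw [hb]
    congr 1
    apply Finset.sum_congr rfl
    intro i _
    rw [map_sub, ← hfrobdef, ← hfrobdef, hfrob, hfrob,
      show 3 * i + 2 + 1 = 3 * i + 3 by omega, show 3 * i + 3 + 1 = 3 * i + 4 by omega]
  rw [hS, hcube, Finset.sum_sub_distrib, Finset.sum_sub_distrib]
  rw [Finset.sum_add_distrib, Finset.sum_add_distrib] at hT
  have hβ0 : β = g 0 := by simp [hg]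
  rw [hβ0]
  linear_combination -hT + (g 0 + ∑ i ∈ Finset.range m, g (3 * i + 3)) * h3
end

section
/- For every a ∈ F_{2^n}^×, the points P⁺ = (a^{1/4}, a^{1/2}) and P⁻ = (a^{1/4}, a^{1/2} + a^{1/4}) lie on the elliptic curve E: y² + xy = x³ + a over F_{2^n} and have order exactly 4, with [2]P⁺ = [2]P⁻ = (0, a^{1/2}), the unique affine point of order 2. -/
/-!
In characteristic 2 the discriminant of `y² + xy = x³ + a` is `a`, so for `a ≠ 0` every affine
point is nonsingular. The negative of `(x, y)` is `(x, y + x)`, hence the only affine point of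
order 2 is `T = (0, √a)`. The tangent at `(x, y)` with `x ≠ 0` has slope `x + y / x`, which gives
`x(2P) = x² + a / x²`; this vanishes exactly at `x = a^{1/4}`, and then `y(2P) = x²`, so both
points above `a^{1/4}` double to `T` and therefore have order 4.
-/

open WeierstrassCurve

/-- The curve `y² + xy = x³ + a` over a field. -/
def E2 {F : Type*} [Field F] (a : F) : WeierstrassCurve.Affine F :=
  { a₁ := 1, a₂ := 0, a₃ := 0, a₄ := 0, a₆ := a }

theorem addOrderOf_eq_four_of_two_nsmul {G : Type*} [AddMonoid G] {P T : G}
    (hT : addOrderOf T = 2) (hP : 2 • P = T) : addOrderOf P = 4 :=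
  addOrderOf_eq_prime_pow (p := 2) (n := 1) (by rw [pow_one, hP]; rintro rfl; simp at hT)
    (by rw [pow_two, mul_nsmul', hP, ← hT, addOrderOf_nsmul_eq_zero])

namespace E2

open Affine

variable {F : Type*} [Field F] {a x y : F}

theorem equation_iff : (E2 a).Equation x y ↔ y ^ 2 + x * y = x ^ 3 + a := by
  rw [Affine.equation_iff]
  simp [E2]

theorem equation_zero_iff : (E2 a).Equation 0 y ↔ y ^ 2 = a := by
  simp [equation_iff]

theorem equation_sq (hx : x ^ 4 = a) : (E2 a).Equation x (x ^ 2) := by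
  rw [equation_iff]
  linear_combination hx

variable [CharP F 2]

theorem Δ_eq : (E2 a).Δ = a := by
  simp only [WeierstrassCurve.Δ, b₂, b₄, b₆, b₈, E2]
  linear_combination (-a - 216 * a ^ 2) * CharTwo.two_eq_zero (R := F)

theorem nonsingular_of_equation (ha : a ≠ 0) (h : (E2 a).Equation x y) :
    (E2 a).Nonsingular x y := by
  have hΔ : (E2 a).Δ ≠ 0 := by rwa [Δ_eq]
  exact (equation_iff_nonsingular_of_Δ_ne_zero hΔ).1 h

theorem negY_eq : (E2 a).negY x y = y + x := by
  simp only [negY, E2]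
  linear_combination (-y - x) * CharTwo.two_eq_zero (R := F)

theorem Y_eq_negY_iff : y = (E2 a).negY x y ↔ x = 0 := by
  rw [negY_eq, left_eq_add]

theorem equation_sq_add_self (hx : x ^ 4 = a) : (E2 a).Equation x (x ^ 2 + x) := by
  rw [equation_iff]
  linear_combination hx + (x ^ 3 + x ^ 2) * CharTwo.two_eq_zero (R := F)

variable [DecidableEq F]

theorem slope_self (hx : x ≠ 0) : (E2 a).slope x x y y = (x ^ 2 + y) / x := by
  rw [slope_of_Y_ne rfl (Y_eq_negY_iff.not.2 hx), negY_eq,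
    show y - (y + x) = x by linear_combination (-x) * CharTwo.two_eq_zero (R := F)]
  simp only [E2]
  congr 1
  linear_combination (x ^ 2 - y) * CharTwo.two_eq_zero (R := F)

theorem addX_self (h : (E2 a).Equation x y) (hx : x ≠ 0) :
    (E2 a).addX x x ((E2 a).slope x x y y) = x ^ 2 + a / x ^ 2 := by
  rw [equation_iff] at h
  rw [slope_self hx, addX]
  simp only [E2]
  field_simp
  linear_combination h + x ^ 2 * y * CharTwo.two_eq_zero (R := F)

theorem two_nsmul_some_zero (h : (E2 a).Nonsingular 0 y) : 2 • Point.some _ _ h = 0 := by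
  rw [two_nsmul]
  exact Point.add_self_of_Y_eq (Y_eq_negY_iff.2 rfl)

theorem two_nsmul_some_of_X_pow_four (ha : a ≠ 0) (h : (E2 a).Nonsingular x y)
    (hx : x ^ 4 = a) (h₂ : (E2 a).Nonsingular 0 (x ^ 2)) :
    2 • Point.some _ _ h = Point.some _ _ h₂ := by
  have hx0 : x ≠ 0 := by rintro rfl; simp [← hx] at ha
  have hX : (E2 a).addX x x ((E2 a).slope x x y y) = 0 := by
    rw [addX_self h.1 hx0, ← hx]
    field_simp
    linear_combination x ^ 2 * CharTwo.two_eq_zero (R := F)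
  rw [two_nsmul, Point.add_self_of_Y_ne (Y_eq_negY_iff.not.2 hx0), Point.some.injEq]
  refine ⟨hX, ?_⟩
  rw [addY, negAddY, hX, slope_self hx0, negY_eq]
  field_simp
  linear_combination (-x ^ 3) * CharTwo.two_eq_zero (R := F)

theorem eq_some_zero_of_addOrderOf_eq_two {s : F} (h₂ : (E2 a).Nonsingular 0 s)
    {Q : (E2 a).Point} (hQ : addOrderOf Q = 2) : Q = Point.some _ _ h₂ := by
  rcases Q with _ | @⟨x, y, h⟩
  · simp [← Point.zero_def] at hQ
  have hy : y = (E2 a).negY x y := by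
    by_contra hy
    have h2Q := addOrderOf_nsmul_eq_zero (Point.some _ _ h)
    rw [hQ, two_nsmul, Point.add_self_of_Y_ne hy] at h2Q
    exact Point.some_ne_zero _ h2Q
  obtain rfl : x = 0 := Y_eq_negY_iff.1 hy
  rw [Point.some.injEq]
  exact ⟨rfl, CharTwo.sq_injective <|
    (equation_zero_iff.1 h.1).trans (equation_zero_iff.1 h₂.1).symm⟩

end E2

open Classical in
/-- For every `a ∈ 𝔽_{2^n}ˣ`, the points `P⁺ = (a^{1/4}, a^{1/2})` and
`P⁻ = (a^{1/4}, a^{1/2} + a^{1/4})` lie on `E : y² + xy = x³ + a` and have order exactly 4,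
with `[2]P⁺ = [2]P⁻ = (0, a^{1/2})`, the unique affine point of order 2. -/
theorem order_four_points (n : ℕ) (a r s : GaloisField 2 n) (ha : a ≠ 0)
    (hs : s ^ 2 = a) (hr : r ^ 2 = s) :
    (E2 a).Equation r s ∧ (E2 a).Equation r (s + r) ∧ (E2 a).Equation 0 s ∧
    ∃ (hplus : (E2 a).Nonsingular r s) (hminus : (E2 a).Nonsingular r (s + r))
      (h₂ : (E2 a).Nonsingular 0 s),
      addOrderOf (Affine.Point.some _ _ hplus) = 4 ∧
      addOrderOf (Affine.Point.some _ _ hminus) = 4 ∧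
      2 • Affine.Point.some _ _ hplus = Affine.Point.some _ _ h₂ ∧
      2 • Affine.Point.some _ _ hminus = Affine.Point.some _ _ h₂ ∧
      addOrderOf (Affine.Point.some _ _ h₂) = 2 ∧
      ∀ Q : (E2 a).Point, addOrderOf Q = 2 → Q = Affine.Point.some _ _ h₂ := by
  subst hr
  have hr4 : r ^ 4 = a := by rw [← hs]; ring
  have onPlus := E2.equation_sq hr4
  have onMinus := E2.equation_sq_add_self hr4
  have onT : (E2 a).Equation 0 (r ^ 2) := E2.equation_zero_iff.2 hs
  have nsT := E2.nonsingular_of_equation ha onT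
  have hT : addOrderOf (Affine.Point.some _ _ nsT) = 2 :=
    addOrderOf_eq_prime (E2.two_nsmul_some_zero nsT) (Affine.Point.some_ne_zero nsT)
  have dblPlus :=
    E2.two_nsmul_some_of_X_pow_four ha (E2.nonsingular_of_equation ha onPlus) hr4 nsT
  have dblMinus :=
    E2.two_nsmul_some_of_X_pow_four ha (E2.nonsingular_of_equation ha onMinus) hr4 nsT
  exact ⟨onPlus, onMinus, onT, _, _, nsT, addOrderOf_eq_four_of_two_nsmul hT dblPlus,
    addOrderOf_eq_four_of_two_nsmul hT dblMinus, dblPlus, dblMinus, hT,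
    fun _ hQ => E2.eq_some_zero_of_addOrderOf_eq_two nsT hQ⟩
end

section
/- For every a ∈ F_{3^n}^×, the point P₃ = (a^{1/3}, a^{1/3}) lies on the elliptic curve E: y² = x³ + x² − a over F_{3^n} and has order exactly 3. -/
open WeierstrassCurve

/-- The curve `y² = x³ + x² - a` over a field. -/
def E3 {F : Type*} [Field F] (a : F) : WeierstrassCurve.Affine F :=
  { a₁ := 0, a₂ := 1, a₃ := 0, a₄ := 0, a₆ := -a }

/-!
On `y² = x³ + x² - a` the point `P = (c, c)` with `c³ = a` is a solution because both sides
equal `c²`. When `3 = 0` (and `c ≠ 0`, as `a ≠ 0`) the tangent at `P` has slope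
`(3c² + 2c) / 2c = 1`, and doubling gives `x(2P) = 1 - 1 - 2c = c` and `y(2P) = -c`,
i.e. `2P = -P`. Hence `3P = 0` with `P ≠ 0`, so `P` has order exactly `3`.
-/

namespace E3

variable {F : Type*} [Field F] {a c : F}

lemma negY_eq_neg (x y : F) : (E3 a).negY x y = -y := by
  simp [Affine.negY, E3]

lemma equation_of_pow_three_eq (hc : c ^ 3 = a) : (E3 a).Equation c c := by
  rw [Affine.equation_iff]
  simp only [E3]
  linear_combination -hc

lemma self_ne_negY (h3 : (3 : F) = 0) (hc0 : c ≠ 0) : c ≠ (E3 a).negY c c := by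
  rw [negY_eq_neg]
  intro h
  exact hc0 (neg_eq_zero.mp (by linear_combination h - c * h3))

lemma nonsingular_of_pow_three_eq (h3 : (3 : F) = 0) (hc : c ^ 3 = a) (hc0 : c ≠ 0) :
    (E3 a).Nonsingular c c := by
  rw [Affine.nonsingular_iff]
  refine ⟨equation_of_pow_three_eq hc, Or.inr ?_⟩
  simpa only [Affine.negY, E3] using self_ne_negY (a := a) h3 hc0

variable [DecidableEq F]

lemma slope_self (h3 : (3 : F) = 0) (hc0 : c ≠ 0) : (E3 a).slope c c c c = 1 := by
  have hne := self_ne_negY (a := a) h3 hc0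
  rw [Affine.slope_of_Y_ne rfl hne, div_eq_one_iff_eq (sub_ne_zero.mpr hne), negY_eq_neg]
  simp only [E3]
  linear_combination c ^ 2 * h3

lemma two_nsmul_point (h3 : (3 : F) = 0) (hc : c ^ 3 = a) (hc0 : c ≠ 0) :
    2 • Affine.Point.some c c (nonsingular_of_pow_three_eq h3 hc hc0) =
      -Affine.Point.some c c (nonsingular_of_pow_three_eq h3 hc hc0) := by
  have hx : (E3 a).addX c c ((E3 a).slope c c c c) = c := by
    rw [slope_self h3 hc0]
    simp only [Affine.addX, E3]
    linear_combination -c * h3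
  have hy : (E3 a).negAddY c c c ((E3 a).slope c c c c) = c := by
    rw [Affine.negAddY, hx, slope_self h3 hc0]
    ring
  rw [two_nsmul, Affine.Point.add_self_of_Y_ne' (self_ne_negY h3 hc0)]
  simp only [hx, hy, Affine.Point.neg_some, negY_eq_neg]

lemma addOrderOf_point (h3 : (3 : F) = 0) (hc : c ^ 3 = a) (hc0 : c ≠ 0) :
    addOrderOf (Affine.Point.some c c (nonsingular_of_pow_three_eq h3 hc hc0)) = 3 := by
  have : Fact (Nat.Prime 3) := ⟨Nat.prime_three⟩
  refine addOrderOf_eq_prime ?_ (Affine.Point.some_ne_zero _)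
  rw [show 3 = 2 + 1 from rfl, add_nsmul, two_nsmul_point h3 hc hc0, one_nsmul, neg_add_cancel]

end E3

open Classical in
/-- For every `a ∈ 𝔽_{3^n}ˣ`, the point `P₃ = (a^{1/3}, a^{1/3})` lies on
`E : y² = x³ + x² - a` over `𝔽_{3^n}` and has order exactly 3. -/
theorem order_three_point (n : ℕ) (a c : GaloisField 3 n) (ha : a ≠ 0) (hc : c ^ 3 = a) :
    (E3 a).Equation c c ∧
    ∃ h : (E3 a).Nonsingular c c, addOrderOf (Affine.Point.some c c h) = 3 := by
  have : Fact (Nat.Prime 3) := ⟨Nat.prime_three⟩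
  have h3 : (3 : GaloisField 3 n) = 0 := by
    exact_mod_cast CharP.cast_eq_zero (GaloisField 3 n) 3
  have hc0 : c ≠ 0 := by
    rintro rfl
    exact ha (by rw [← hc, zero_pow three_ne_zero])
  exact ⟨E3.equation_of_pow_three_eq hc, _, E3.addOrderOf_point h3 hc hc0⟩
end

section
/- Let p ∈ {2, 3}, a ∈ F_{p^n}^×, and E(a) the elliptic curve associated to a (y² + xy = x³ + a if p = 2; y² = x³ + x² − a if p = 3), so that #E(a)(F_{p^n}) = p^n + K_{p^n}(a). Then for 1 ≤ h ≤ n: p^h divides K_{p^n}(a) if and only if E(a)(F_{p^n}) contains a point of order p^h. -/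
/-!
Since `h ≤ n`, `p ^ h` divides `K = #E - p ^ n` exactly when it divides `#E`. In characteristic
`p ∈ {2, 3}` all nonzero `p`-torsion points of `E(a)` have the same `x`-coordinate (`x = 0`,
resp. `x³ = a`), so `#E[p] ≤ p`, and hence `#E[p ^ k] ≤ p ^ k` for every `k`. A subgroup of order
`p ^ h`, which exists once `p ^ h ∣ #E`, therefore cannot lie in `E[p ^ (h - 1)]`, and any of its
points outside `E[p ^ (h - 1)]` has order `p ^ h`. The converse is Lagrange's theorem.
-/

open WeierstrassCurve

/-- The elliptic curve associated to `a`: `y² + xy = x³ + a` if `p = 2`,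
and `y² = x³ + x² - a` if `p = 3`. -/
noncomputable def Ekl (p n : ℕ) [Fact p.Prime] (a : GaloisField p n) :
    WeierstrassCurve.Affine (GaloisField p n) :=
  if p = 2 then { a₁ := 1, a₂ := 0, a₃ := 0, a₄ := 0, a₆ := a }
  else { a₁ := 0, a₂ := 1, a₃ := 0, a₄ := 0, a₆ := -a }

open scoped Classical in
/-- The Kloosterman sum `K_{p^n}(a) = 1 + ∑_{x ∈ 𝔽_{p^n}^×} ζ^{Tr(x⁻¹ + ax)}`,
where `ζ` is a (primitive `p`-th) root of unity in `ℂ` and `Tr` is the absolute trace. -/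
noncomputable def Kl (p n : ℕ) [Fact p.Prime] (ζ : ℂ) (a : GaloisField p n) : ℂ :=
  letI : Fintype (GaloisField p n) := Fintype.ofFinite _
  1 + ∑ x ∈ Finset.univ \ {(0 : GaloisField p n)},
    ζ ^ (Algebra.trace (ZMod p) (GaloisField p n) (x⁻¹ + a * x)).val

lemma exists_eq_mul_intCast_iff_dvd {R : Type*} [CommRing R] [CharZero R] {N m q : ℕ} {K : R}
    (hK : (N : R) = m + K) (hqm : q ∣ m) : (∃ k : ℤ, K = q * k) ↔ q ∣ N := by
  obtain ⟨d, rfl⟩ := hqm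
  constructor
  · rintro ⟨k, rfl⟩
    have hN : (N : ℤ) = q * (d + k) := by
      exact_mod_cast (show (N : R) = q * (d + k) by rw [hK]; push_cast; ring)
    exact Int.natCast_dvd_natCast.mp ⟨d + k, hN⟩
  · rintro ⟨c, rfl⟩
    refine ⟨c - d, ?_⟩
    push_cast at hK ⊢
    linear_combination -hK

theorem exists_addSubgroup_card_pow_prime {G : Type*} [AddGroup G] [Finite G] (p : ℕ) {n : ℕ}
    [Fact p.Prime] (hdvd : p ^ n ∣ Nat.card G) : ∃ K : AddSubgroup G, Nat.card K = p ^ n := by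
  obtain ⟨K, hK⟩ := Sylow.exists_subgroup_card_pow_prime (G := Multiplicative G) p hdvd
  exact ⟨K.toAddSubgroup', hK⟩

namespace AddCommGroup

variable (G : Type*) [AddCommGroup G]

def torsionBy (n : ℕ) : AddSubgroup G := (nsmulAddMonoidHom n : G →+ G).ker

variable {G}

@[simp]
lemma mem_torsionBy {n : ℕ} {x : G} : x ∈ torsionBy G n ↔ n • x = 0 := Iff.rfl

lemma card_torsionBy_le_of_eq_or_eq_neg {p : ℕ} (hp : p = 2 ∨ p = 3)
    (h : ∀ P ∈ torsionBy G p, ∀ Q ∈ torsionBy G p, P ≠ 0 → Q ≠ 0 → Q = P ∨ Q = -P) :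
    Nat.card (torsionBy G p) ≤ p := by
  rw [← SetLike.coe_sort_coe, Nat.card_coe_set_eq]
  by_cases hP : ∃ P ∈ torsionBy G p, P ≠ 0
  · obtain ⟨P, hPp, hP0⟩ := hP
    have hsub : (torsionBy G p : Set G) ⊆ {0, P, -P} := fun Q hQ => by
      by_cases hQ0 : Q = 0
      · simp [hQ0]
      · simpa [hQ0] using h P hPp Q hQ hP0 hQ0
    refine (Set.ncard_le_ncard hsub (Set.toFinite _)).trans ?_
    rcases hp with rfl | rfl
    · have hneg : -P = P := neg_eq_of_add_eq_zero_left (by simpa [two_nsmul] using hPp)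
      rw [hneg, Set.pair_eq_singleton]
      exact (Set.ncard_insert_le _ _).trans (by simp)
    · exact (Set.ncard_insert_le _ _).trans
        (Nat.succ_le_succ ((Set.ncard_insert_le _ _).trans (by simp)))
  · push Not at hP
    have hsub : (torsionBy G p : Set G) ⊆ {0} := fun Q hQ => hP Q hQ
    refine (Set.ncard_le_ncard hsub (Set.toFinite _)).trans ?_
    rcases hp with rfl | rfl <;> simp

variable [Finite G]

lemma card_torsionBy_mul_le (m n : ℕ) :
    Nat.card (torsionBy G (m * n)) ≤ Nat.card (torsionBy G m) * Nat.card (torsionBy G n) := by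
  set H := torsionBy G (m * n)
  let f : H →+ G := (nsmulAddMonoidHom n).comp H.subtype
  have hrange : f.range ≤ torsionBy G m := by
    rintro _ ⟨x, rfl⟩
    show m • n • (x : G) = 0
    rw [smul_smul]
    exact x.2
  have hker : f.ker.map H.subtype ≤ torsionBy G n := by
    rintro _ ⟨x, hx, rfl⟩
    exact hx
  calc Nat.card H = Nat.card f.range * Nat.card f.ker := by
        rw [← AddSubgroup.index_ker, mul_comm, AddSubgroup.card_mul_index]
    _ ≤ _ := by
      refine Nat.mul_le_mul (AddSubgroup.card_le_of_le hrange) ?_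
      rw [← AddSubgroup.card_map_of_injective H.subtype_injective]
      exact AddSubgroup.card_le_of_le hker

lemma card_torsionBy_pow_le {p : ℕ} (hp : Nat.card (torsionBy G p) ≤ p) (k : ℕ) :
    Nat.card (torsionBy G (p ^ k)) ≤ p ^ k := by
  induction k with
  | zero => simp
  | succ k ih =>
    rw [pow_succ]
    exact (card_torsionBy_mul_le _ _).trans (Nat.mul_le_mul ih hp)

theorem exists_addOrderOf_eq_prime_pow {p h : ℕ} [Fact p.Prime]
    (hp : Nat.card (torsionBy G p) ≤ p) (hdvd : p ^ h ∣ Nat.card G) :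
    ∃ x : G, addOrderOf x = p ^ h := by
  cases h with
  | zero => exact ⟨0, by simp⟩
  | succ k =>
    obtain ⟨K, hK⟩ := exists_addSubgroup_card_pow_prime p hdvd
    obtain ⟨x, hxK, hx⟩ : ∃ x ∈ K, x ∉ torsionBy G (p ^ k) := by
      by_contra! hle
      have hcard := (AddSubgroup.card_le_of_le hle).trans (card_torsionBy_pow_le hp k)
      rw [hK] at hcard
      exact (Nat.pow_lt_pow_right (Fact.out : p.Prime).one_lt k.lt_succ_self).not_ge hcard
    have hxp : p ^ (k + 1) • (⟨x, hxK⟩ : K) = 0 := hK ▸ card_nsmul_eq_zero'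
    exact ⟨x, addOrderOf_eq_prime_pow hx (congrArg Subtype.val hxp)⟩

end AddCommGroup

namespace WeierstrassCurve.Affine

variable {F : Type*} [Field F]

instance [Finite F] (W : Affine F) : Finite W.Point :=
  .of_equiv (Option {xy : F × F // W.Nonsingular xy.1 xy.2}) W.nonsingularPointEquiv.symm

variable [DecidableEq F] {W : Affine F}

open AddCommGroup

lemma Point.eq_or_eq_neg_of_mem_torsionBy {n : ℕ}
    (hX : ∀ {x₁ y₁ x₂ y₂ : F} (h₁ : W.Nonsingular x₁ y₁) (h₂ : W.Nonsingular x₂ y₂),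
      n • some x₁ y₁ h₁ = 0 → n • some x₂ y₂ h₂ = 0 → x₁ = x₂) :
    ∀ P ∈ torsionBy W.Point n, ∀ Q ∈ torsionBy W.Point n, P ≠ 0 → Q ≠ 0 → Q = P ∨ Q = -P := by
  rintro (_ | ⟨x₁, y₁, h₁⟩) hP (_ | ⟨x₂, y₂, h₂⟩) hQ hP0 hQ0
  · exact absurd rfl hP0
  · exact absurd rfl hP0
  · exact absurd rfl hQ0
  · exact Point.X_eq_iff.mp (hX h₂ h₁ hQ hP)

lemma Point.X_eq_zero_of_two_nsmul_eq_zero [CharP F 2] (ha₁ : W.a₁ = 1) (ha₃ : W.a₃ = 0)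
    {x y : F} {h : W.Nonsingular x y} (h2 : 2 • some x y h = 0) : x = 0 := by
  rw [two_nsmul, add_eq_zero_iff_eq_neg, neg_some, some.injEq, negY, ha₁, ha₃] at h2
  linear_combination h2.2 - y * CharP.cast_eq_zero F 2

lemma Point.X_pow_three_eq_of_three_nsmul_eq_zero [CharP F 3] (ha₁ : W.a₁ = 0) (ha₂ : W.a₂ = 1)
    (ha₃ : W.a₃ = 0) (ha₄ : W.a₄ = 0) {x y : F} {h : W.Nonsingular x y}
    (h3 : 3 • some x y h = 0) : x ^ 3 = -W.a₆ := by
  have hchar : (3 : F) = 0 := by exact_mod_cast CharP.cast_eq_zero F 3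
  have hnegY : W.negY x y = -y := by rw [negY, ha₁, ha₃]; ring
  have hdouble : some x y h + some x y h = -some x y h := by
    rw [← add_eq_zero_iff_eq_neg, ← two_nsmul, ← succ_nsmul]
    exact h3
  have hy : y ≠ W.negY x y := by
    rw [hnegY]
    intro hy
    rw [Point.add_self_of_Y_eq (hy.trans hnegY.symm), eq_comm, neg_eq_zero] at hdouble
    exact Point.some_ne_zero h hdouble
  have hy0 : y ≠ 0 := fun hy0 => hy (by rw [hnegY, hy0]; simp)
  rw [Point.add_self_of_Y_ne hy, neg_some, some.injEq] at hdouble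
  have hslope : W.slope x x y y = x / y := by
    rw [slope_of_Y_ne rfl hy, hnegY, ha₁, ha₂, ha₄, div_eq_div_iff (by grind) hy0]
    linear_combination (x ^ 2 * y) * hchar
  have hxy : x ^ 2 = y ^ 2 := by
    have h1 := hdouble.1
    rw [hslope, addX, ha₁, ha₂] at h1
    field_simp at h1
    linear_combination h1 + x * y ^ 2 * hchar
  have heq := h.1
  rw [equation_iff, ha₁, ha₂, ha₃, ha₄] at heq
  linear_combination -hxy - heq

end WeierstrassCurve.Affine

open WeierstrassCurve.Affine in
lemma card_torsionBy_Ekl_le (p n : ℕ) [Fact p.Prime] [DecidableEq (GaloisField p n)]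
    (hp : p = 2 ∨ p = 3) (a : GaloisField p n) :
    Nat.card (AddCommGroup.torsionBy (Ekl p n a).Point p) ≤ p := by
  refine AddCommGroup.card_torsionBy_le_of_eq_or_eq_neg hp
    (Point.eq_or_eq_neg_of_mem_torsionBy fun h₁ h₂ hP hQ => ?_)
  rcases hp with rfl | rfl
  · rw [Point.X_eq_zero_of_two_nsmul_eq_zero (by simp [Ekl]) (by simp [Ekl]) hP,
      Point.X_eq_zero_of_two_nsmul_eq_zero (by simp [Ekl]) (by simp [Ekl]) hQ]
  · have ha := fun {x y} (h : (Ekl 3 n a).Nonsingular x y) =>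
      Point.X_pow_three_eq_of_three_nsmul_eq_zero (h := h)
        (by simp [Ekl]) (by simp [Ekl]) (by simp [Ekl]) (by simp [Ekl])
    refine frobenius_inj (GaloisField 3 n) 3 ?_
    rw [frobenius_def, frobenius_def, ha h₁ hP, ha h₂ hQ]

open scoped Classical in
theorem kloosterman_divisibility_general (p n : ℕ) [Fact p.Prime] (hp : p = 2 ∨ p = 3)
    (ζ : ℂ) (a : GaloisField p n)
    (hcard : (Nat.card (Ekl p n a).Point : ℂ) = (p : ℂ) ^ n + Kl p n ζ a)
    (h : ℕ) (h2 : h ≤ n) :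
    (∃ k : ℤ, Kl p n ζ a = (p : ℂ) ^ h * (k : ℂ)) ↔
      ∃ P : (Ekl p n a).Point, addOrderOf P = p ^ h := by
  have hdvd := exists_eq_mul_intCast_iff_dvd (q := p ^ h) (m := p ^ n)
    (by exact_mod_cast hcard) (pow_dvd_pow p h2)
  push_cast at hdvd
  rw [hdvd]
  exact ⟨AddCommGroup.exists_addOrderOf_eq_prime_pow (card_torsionBy_Ekl_le p n hp a),
    fun ⟨P, hP⟩ => hP ▸ addOrderOf_dvd_natCard P⟩

open scoped Classical in
/-- Let `p ∈ {2, 3}`, `a ∈ 𝔽_{p^n}ˣ`, and `E(a)` the associated elliptic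
curve, so that `#E(a)(𝔽_{p^n}) = p^n + K_{p^n}(a)`. Then for `1 ≤ h ≤ n`:
`p^h` divides `K_{p^n}(a)` iff `E(a)(𝔽_{p^n})` contains a point of order `p^h`. -/
theorem kloosterman_divisibility (p n : ℕ) [Fact p.Prime] (hp : p = 2 ∨ p = 3) (hn : 0 < n)
    (ζ : ℂ) (hζ : IsPrimitiveRoot ζ p) (a : GaloisField p n) (ha : a ≠ 0)
    (hcard : (Nat.card (Ekl p n a).Point : ℂ) = (p : ℂ) ^ n + Kl p n ζ a)
    (h : ℕ) (h1 : 1 ≤ h) (h2 : h ≤ n) :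
    (∃ k : ℤ, Kl p n ζ a = (p : ℂ) ^ h * (k : ℂ)) ↔
      ∃ P : (Ekl p n a).Point, addOrderOf P = p ^ h :=
  kloosterman_divisibility_general p n hp ζ a hcard h h2
end
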